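/- Let A be a matrix of the form A = I + α(γ·W·P·Π − W) acting on ℝ^n, where W is diagonal with diagonal entries in [ω_min, ω_max] ⊂ (0,1), P·Π is row-substochastic with nonnegative entries and row sums at most 1, γ ∈ [0,1), and α ∈ (0, 1/(ω_max)]. Then the induced sup-norm of A satisfies ‖A‖_∞ ≤ 1 − α·ω_min·(1−γ). -/

import Mathlib

open Finset Matrix

/-!
Each row of `A` is `(1 - α ω_i) eᵢ + α γ ω_i Mᵢ`. Both coefficients are nonnegative (the first
because `α ω_i ≤ α ω_max ≤ 1`), so by the triangle inequality the absolute row sum is at most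
`1 - α ω_i + α γ ω_i · 1 = 1 - α ω_i (1 - γ)`, and `ω_i ≥ ω_min`.
-/

namespace Matrix

variable {ι : Type*} [Fintype ι] [DecidableEq ι]

theorem one_add_smul_smul_diagonal_mul_sub_diagonal (ω : ι → ℝ) (M : Matrix ι ι ℝ) (α γ : ℝ) :
    1 + α • (γ • (diagonal ω * M) - diagonal ω) =
      diagonal (fun i => 1 - α * ω i) + diagonal (fun i => α * γ * ω i) * M := by
  ext i j
  by_cases h : i = j
  · subst h; simp only [add_apply, one_apply_eq, smul_apply, sub_apply, diagonal_mul,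
      diagonal_apply_eq, smul_eq_mul]; ring
  · simp only [add_apply, one_apply_ne h, smul_apply, sub_apply, diagonal_mul,
      diagonal_apply_ne _ h, smul_eq_mul]; ring

theorem sum_abs_diagonal_add_diagonal_mul_apply_le (d e : ι → ℝ) (M : Matrix ι ι ℝ) (i : ι) :
    ∑ j, |(diagonal d + diagonal e * M) i j| ≤ |d i| + |e i| * ∑ j, |M i j| := by
  calc ∑ j, |(diagonal d + diagonal e * M) i j|
      ≤ ∑ j, (|diagonal d i j| + |e i| * |M i j|) := by
        gcongr with j
        rw [add_apply, diagonal_mul, ← abs_mul]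
        exact abs_add_le _ _
    _ = |d i| + |e i| * ∑ j, |M i j| := by
        simp only [sum_add_distrib, diagonal_apply, apply_ite, abs_zero, sum_ite_eq, mem_univ,
          if_true, mul_sum]

end Matrix

theorem switching_matrix_sup_norm_bound_general
    (n : ℕ)
    (ω : Fin n → ℝ) (ωmin ωmax : ℝ)
    (hωmin : 0 < ωmin)
    (hω : ∀ i, ωmin ≤ ω i ∧ ω i ≤ ωmax)
    (M : Matrix (Fin n) (Fin n) ℝ)
    (hMnn : ∀ i j, 0 ≤ M i j) (hMrow : ∀ i, ∑ j, M i j ≤ 1)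
    (γ α : ℝ) (hγ0 : 0 ≤ γ) (hγ1 : γ < 1) (hα0 : 0 < α) (hα1 : α * ωmax ≤ 1)
    (A : Matrix (Fin n) (Fin n) ℝ)
    (hA : A = 1 + α • (γ • (Matrix.diagonal ω * M) - Matrix.diagonal ω)) :
    ∀ i, ∑ j, |A i j| ≤ 1 - α * ωmin * (1 - γ) := by
  intro i
  obtain ⟨hωi_min, hωi_max⟩ := hω i
  have hωi : 0 ≤ ω i := hωmin.le.trans hωi_min
  have hdiag : 0 ≤ 1 - α * ω i := by nlinarith
  have hoff : 0 ≤ α * γ * ω i := by positivity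
  have hMi : ∑ j, |M i j| ≤ 1 := by
    simpa only [abs_of_nonneg (hMnn i _)] using hMrow i
  rw [hA, one_add_smul_smul_diagonal_mul_sub_diagonal]
  calc _ ≤ |1 - α * ω i| + |α * γ * ω i| * ∑ j, |M i j| :=
        sum_abs_diagonal_add_diagonal_mul_apply_le _ _ M i
    _ ≤ 1 - α * ω i + α * γ * ω i := by
        rw [abs_of_nonneg hdiag, abs_of_nonneg hoff]
        exact add_le_add_right (mul_le_of_le_one_right hoff hMi) _
    _ ≤ 1 - α * ωmin * (1 - γ) := by
        nlinarith [mul_nonneg (mul_nonneg hα0.le (sub_nonneg.2 hγ1.le)) (sub_nonneg.2 hωi_min)]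

/-- Sup-norm bound for the switching-system matrix
A = I + α(γ W M − W), where W = diag(ω) with ω_i ∈ [ω_min, ω_max] ⊂ (0,1),
M (= P·Π) is nonnegative with row sums at most 1, γ ∈ [0,1), and α ∈ (0, 1/ω_max].
Then the induced sup norm satisfies max_i Σ_j |A_{ij}| ≤ 1 − α ω_min (1−γ). -/
theorem switching_matrix_sup_norm_bound
    (n : ℕ) (hn : 0 < n)
    (ω : Fin n → ℝ) (ωmin ωmax : ℝ)
    (hωmin : 0 < ωmin) (hωle : ωmin ≤ ωmax) (hωmax : ωmax < 1)
    (hω : ∀ i, ωmin ≤ ω i ∧ ω i ≤ ωmax)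
    (M : Matrix (Fin n) (Fin n) ℝ)
    (hMnn : ∀ i j, 0 ≤ M i j) (hMrow : ∀ i, ∑ j, M i j ≤ 1)
    (γ α : ℝ) (hγ0 : 0 ≤ γ) (hγ1 : γ < 1) (hα0 : 0 < α) (hα1 : α * ωmax ≤ 1)
    (A : Matrix (Fin n) (Fin n) ℝ)
    (hA : A = 1 + α • (γ • (Matrix.diagonal ω * M) - Matrix.diagonal ω)) :
    ∀ i, ∑ j, |A i j| ≤ 1 - α * ωmin * (1 - γ) :=
  switching_matrix_sup_norm_bound_general n ω ωmin ωmax hωmin hω M hMnn hMrow γ α hγ0 hγ1 hα0 hα1 A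
    hA
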